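/- Let G₀ be a K_{h,h}-free graph and let G be its blowup obtained by replacing each vertex with a clique of size t = s/(2h) (complete bipartite joins between blobs corresponding to edges of G₀, no edges between blobs corresponding to non-edges). Then G is K_{s,s}-free. -/

import Mathlib

open SimpleGraph

/-- `G` contains no (not necessarily induced) subgraph isomorphic to `K_{s,s}`. -/
def KssFree {V : Type*} (s : ℕ) (G : SimpleGraph V) : Prop :=
  ∀ f : completeBipartiteGraph (Fin s) (Fin s) →g G, ¬ Function.Injective f

/-- The blowup of `G₀` where every vertex is replaced by a clique ("blob") of size `t`,
with complete joins between blobs corresponding to edges of `G₀`. -/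
def blowup {W : Type*} (G₀ : SimpleGraph W) (t : ℕ) : SimpleGraph (W × Fin t) where
  Adj x y := (x.1 = y.1 ∧ x.2 ≠ y.2) ∨ G₀.Adj x.1 y.1
  symm := by
    constructor
    rintro x y (⟨h1, h2⟩ | h)
    · exact Or.inl ⟨h1.symm, h2.symm⟩
    · exact Or.inr h.symm
  loopless := by
    constructor
    rintro x (⟨h1, h2⟩ | h)
    · exact h2 rfl
    · exact G₀.irrefl h

/-!
A copy of `K_{s,s}` in the blowup meets each blob in at most `t` vertices, so each of its two
sides meets at least `s / t = 2h` blobs. Pick `h` blobs met by the left side, then `h` further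
blobs met by the right side. Distinct blobs are adjacent in the blowup only along edges of `G₀`,
so these `h + h` blobs span a `K_{h,h}` in `G₀`.
-/

namespace SimpleGraph

theorem kssFree_iff_free {V : Type*} (s : ℕ) (G : SimpleGraph V) :
    KssFree s G ↔ (completeBipartiteGraph (Fin s) (Fin s)).Free G :=
  ⟨fun hG ⟨f⟩ ↦ hG f.toHom f.injective, fun hG f hf ↦ hG ⟨f.toCopy hf⟩⟩

theorem blowup_adj_of_fst_ne {W : Type*} {G₀ : SimpleGraph W} {t : ℕ} {x y : W × Fin t}
    (hxy : (blowup G₀ t).Adj x y) (hne : x.1 ≠ y.1) : G₀.Adj x.1 y.1 :=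
  hxy.resolve_left fun h ↦ hne h.1

theorem IsCompleteBetween.of_blowup {W : Type*} {G₀ : SimpleGraph W} {t : ℕ}
    {X Y : Set (W × Fin t)} {A B : Set W} (hXY : (blowup G₀ t).IsCompleteBetween X Y)
    (hA : A ⊆ Prod.fst '' X) (hB : B ⊆ Prod.fst '' Y) (hAB : Disjoint A B) :
    G₀.IsCompleteBetween A B := by
  intro a ha b hb
  obtain ⟨x, hx, rfl⟩ := hA ha
  obtain ⟨y, hy, rfl⟩ := hB hb
  exact blowup_adj_of_fst_ne (hXY hx hy) (hAB.ne_of_mem ha hb)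

end SimpleGraph

namespace Finset

theorem card_le_card_image_fst_mul {α β : Type*} [DecidableEq α] [Fintype β]
    (s : Finset (α × β)) : #s ≤ #(s.image Prod.fst) * Fintype.card β := by
  classical
  calc #s ≤ #(s.image Prod.fst ×ˢ s.image Prod.snd) := card_le_card subset_product
    _ ≤ #(s.image Prod.fst ×ˢ (univ : Finset β)) :=
      card_le_card (product_subset_product_right (subset_univ _))
    _ = #(s.image Prod.fst) * Fintype.card β := by rw [card_product, card_univ]

theorem exists_disjoint_subsets_card_eq {α : Type*} [DecidableEq α] {L R : Finset α} {m n : ℕ}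
    (hL : m ≤ #L) (hR : m + n ≤ #R) :
    ∃ A ⊆ L, ∃ B ⊆ R, Disjoint A B ∧ #A = m ∧ #B = n := by
  obtain ⟨A, hAL, hA⟩ := exists_subset_card_eq hL
  have hRA : n ≤ #(R \ A) := by have := le_card_sdiff A R; omega
  obtain ⟨B, hBR, hB⟩ := exists_subset_card_eq hRA
  exact ⟨A, hAL, B, hBR.trans sdiff_subset,
    disjoint_of_subset_right hBR sdiff_disjoint.symm, hA, hB⟩

end Finset

theorem stmt_7_general {W : Type*} (G₀ : SimpleGraph W) (h t s : ℕ) (ht : 0 < t)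
    (hs : s = 2 * h * t) (hfree : KssFree h G₀) :
    KssFree s (blowup G₀ t) := by
  classical
  rw [kssFree_iff_free] at hfree ⊢
  intro hK
  obtain ⟨X, Y, hX, hY, hXY⟩ := completeBipartiteGraph_isContained_iff.mp hK
  have many_blobs (Z : Finset (W × Fin t)) (hZ : Z.card = Fintype.card (Fin s)) :
      2 * h ≤ (Z.image Prod.fst).card := by
    refine Nat.le_of_mul_le_mul_right ?_ ht
    simpa [hZ, hs] using Z.card_le_card_image_fst_mul
  obtain ⟨A, hAX, B, hBY, hAB, hA, hB⟩ := Finset.exists_disjoint_subsets_card_eq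
    (L := X.image Prod.fst) (R := Y.image Prod.fst) (m := h) (n := h)
    (by have := many_blobs X hX; omega) (by have := many_blobs Y hY; omega)
  refine hfree (completeBipartiteGraph_isContained_iff.mpr ⟨A, B, by simpa, by simpa, ?_⟩)
  exact hXY.of_blowup (by simpa using Finset.coe_subset.mpr hAX)
    (by simpa using Finset.coe_subset.mpr hBY) (Finset.disjoint_coe.mpr hAB)

theorem stmt_7 {W : Type*} (G₀ : SimpleGraph W) (h t s : ℕ) (hh : 0 < h) (ht : 0 < t)
    (hs : s = 2 * h * t) (hfree : KssFree h G₀) :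
    KssFree s (blowup G₀ t) :=
  stmt_7_general G₀ h t s ht hs hfree
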